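/- arXiv:2112.06717 — 3 statements merged into one kernel-verified Lean document; each statement's English description precedes it below -/
import Mathlib

section
/- Let p be a prime, m a positive integer, q = p^m, and let f : 𝔽_q → 𝔽_p be a p-ary function. For β ∈ 𝔽_q and i, j ∈ 𝔽_p set N^f_{i,j}(β) = #{x ∈ 𝔽_q : f(x) = i and Tr(βx) = j}. Then p²·N^f_{i,j}(β) = −q + p·|D_{f,i}| + p·#{x ∈ 𝔽_q : Tr(βx) = j} + Σ_{y∈𝔽_p^*} σ_y( ζ_p^{−i} · Σ_{z∈𝔽_p^*} ζ_p^{jz} · W_f(zβ) ), as an identity in ℂ. -/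
open Finset

noncomputable def zeta (p : ℕ) (a : ZMod p) : ℂ :=
  Complex.exp (2 * Real.pi * Complex.I / p) ^ a.val
def Dset {p : ℕ} {F : Type*} [Fintype F] (f : F → ZMod p) (i : ZMod p) : Finset F :=
  Finset.univ.filter fun x => f x = i
noncomputable def walsh (p : ℕ) {F : Type*} [Fintype F] [CommRing F] [Algebra (ZMod p) F]
    (f : F → ZMod p) (β : F) : ℂ :=
  ∑ x : F, zeta p (f x - Algebra.trace (ZMod p) F (β * x))

-- splitting a sum over ZMod p into 0 plus units
lemma sum_split (p : ℕ) [Fact p.Prime] (h : ZMod p → ℂ) :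
    ∑ u : ZMod p, h u = h 0 + ∑ u : (ZMod p)ˣ, h ((u : ZMod p)) := by
  classical
  have h1 : ∑ u : (ZMod p)ˣ, h ((u : ZMod p)) = ∑ u : {a : ZMod p // a ≠ 0}, h u :=
    Fintype.sum_equiv unitsEquivNeZero _ _ (fun u => rfl)
  have h2 : ∑ u : {a : ZMod p // a ≠ 0}, h (u : ZMod p)
      = ∑ u ∈ Finset.univ.filter (fun a : ZMod p => a ≠ 0), h u :=
    (Finset.sum_subtype _ (by simp) h).symm
  rw [h1, h2, ← Finset.sum_filter_add_sum_filter_not Finset.univ (fun a : ZMod p => a ≠ 0) h]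
  have : Finset.univ.filter (fun a : ZMod p => ¬ a ≠ 0) = {0} := by
    ext a; simp
  rw [this, Finset.sum_singleton, add_comm]

/-- Lemma 3.1. For a `p`-ary function `f : 𝔽_q → 𝔽_p`,
`p² N^f_{i,j}(β) = -q + p|D_{f,i}| + p #{x : Tr(βx) = j}
  + Σ_{y ∈ 𝔽_p^*} σ_y(ζ_p^{-i} Σ_{z ∈ 𝔽_p^*} ζ_p^{jz} W_f(zβ))`,
where `σ_y` is any ring homomorphism `ℂ →+* ℂ` with `σ_y(ζ_p) = ζ_p^y` (such a map restricts
to the automorphism of `ℚ(ζ_p)` determined by `ζ_p ↦ ζ_p^y`). -/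
theorem stmt_0 (p m : ℕ) [Fact p.Prime] (hm : 0 < m)
    (F : Type*) [Field F] [Fintype F] [Algebra (ZMod p) F]
    (hcard : Fintype.card F = p ^ m)
    (f : F → ZMod p) (β : F) (i j : ZMod p)
    (σ : (ZMod p)ˣ → (ℂ →+* ℂ))
    (hσ : ∀ y : (ZMod p)ˣ, σ y (Complex.exp (2 * Real.pi * Complex.I / p))
        = Complex.exp (2 * Real.pi * Complex.I / p) ^ ((y : ZMod p)).val) :
    (p : ℂ) ^ 2 * ((Finset.univ.filter fun x : F =>
        f x = i ∧ Algebra.trace (ZMod p) F (β * x) = j).card : ℂ)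
      = -(p : ℂ) ^ m + (p : ℂ) * ((Dset f i).card : ℂ)
        + (p : ℂ) * ((Finset.univ.filter fun x : F =>
            Algebra.trace (ZMod p) F (β * x) = j).card : ℂ)
        + ∑ y : (ZMod p)ˣ, σ y (zeta p (-i) *
            ∑ z : (ZMod p)ˣ, zeta p (j * (z : ZMod p)) *
              walsh p f (algebraMap (ZMod p) F (z : ZMod p) * β)) := by
  classical
  have hp := (Fact.out : p.Prime)
  haveI : NeZero p := ⟨hp.ne_zero⟩
  have hprim : IsPrimitiveRoot (Complex.exp (2 * Real.pi * Complex.I / p)) p :=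
    Complex.isPrimitiveRoot_exp p hp.ne_zero
  have hζp : (Complex.exp (2 * Real.pi * Complex.I / p)) ^ p = 1 := hprim.pow_eq_one
  set ψ : AddChar (ZMod p) ℂ := AddChar.zmodChar p hζp with hψdef
  have hzeta : ∀ a : ZMod p, zeta p a = ψ a := fun a => rfl
  have hψ1 : ψ ≠ 1 := by
    rw [AddChar.zmod_char_ne_one_iff]
    have : ψ 1 = Complex.exp (2 * Real.pi * Complex.I / p) := by
      rw [hψdef, AddChar.zmodChar_apply, ZMod.val_one _, pow_one]
    rw [this]
    exact hprim.ne_one hp.one_lt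
  have hψprim : ψ.IsPrimitive := AddChar.IsPrimitive.of_ne_one hψ1
  have horth : ∀ a : ZMod p, ∑ u : ZMod p, ψ (u * a) = if a = 0 then (p : ℂ) else 0 := by
    intro a
    rw [AddChar.sum_mulShift a hψprim]
    simp [ZMod.card]
  -- action of σ y on values of ψ
  have hσz : ∀ (y : (ZMod p)ˣ) (a : ZMod p), σ y (ψ a) = ψ ((y : ZMod p) * a) := by
    intro y a
    rw [hψdef, AddChar.zmodChar_apply, map_pow, hσ, ← pow_mul,
      ← AddChar.zmodChar_apply' hζp ((y : ZMod p).val * a.val)]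
    congr 1
    push_cast
    simp [ZMod.natCast_val, ZMod.cast_id]
  -- trace linearity
  set T : F → ZMod p := fun x => Algebra.trace (ZMod p) F (β * x) with hTdef
  have hT : ∀ (c : ZMod p) (x : F),
      Algebra.trace (ZMod p) F (algebraMap (ZMod p) F c * β * x) = c * T x := by
    intro c x
    have : algebraMap (ZMod p) F c * β * x = c • (β * x) := by
      rw [Algebra.smul_def, mul_assoc]
    rw [this, map_smul, smul_eq_mul, hTdef]
  -- the double-character sum
  set g : ZMod p → ZMod p → ℂ :=
    fun u v => ∑ x : F, ψ (u * (f x - i) + v * (T x - j)) with hgdef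
  -- Step A : p² N = ∑_{u,v} g u v
  have hA : ∑ u : ZMod p, ∑ v : ZMod p, g u v
      = (p : ℂ) ^ 2 * ((Finset.univ.filter fun x : F =>
        f x = i ∧ Algebra.trace (ZMod p) F (β * x) = j).card : ℂ) := by
    have swap : ∑ u : ZMod p, ∑ v : ZMod p, g u v
        = ∑ x : F, (∑ u : ZMod p, ψ (u * (f x - i))) * (∑ v : ZMod p, ψ (v * (T x - j))) := by
      simp_rw [hgdef, AddChar.map_add_eq_mul]
      rw [Finset.sum_congr rfl fun u (_ : u ∈ Finset.univ) =>
        Finset.sum_comm (γ := ZMod p) (α := F), Finset.sum_comm]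
      simp_rw [← Finset.mul_sum, ← Finset.sum_mul]
    rw [swap]
    have key : ∀ x : F, (∑ u : ZMod p, ψ (u * (f x - i))) * (∑ v : ZMod p, ψ (v * (T x - j)))
        = if f x = i ∧ T x = j then (p : ℂ) ^ 2 else 0 := by
      intro x
      rw [horth, horth]
      by_cases h1 : f x = i <;> by_cases h2 : T x = j <;>
        simp [sub_eq_zero, h1, h2, sq]
    rw [Finset.sum_congr rfl (fun x _ => key x), Finset.sum_ite, Finset.sum_const,
      Finset.sum_const_zero, add_zero, nsmul_eq_mul, mul_comm]
  -- pieces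
  have hrow : ∑ v : ZMod p, g 0 v
      = (p : ℂ) * ((Finset.univ.filter fun x : F =>
          Algebra.trace (ZMod p) F (β * x) = j).card : ℂ) := by
    have : ∀ v : ZMod p, g 0 v = ∑ x : F, ψ (v * (T x - j)) := by
      intro v; simp [hgdef]
    rw [Finset.sum_congr rfl (fun v _ => this v), Finset.sum_comm]
    have key : ∀ x : F, ∑ v : ZMod p, ψ (v * (T x - j)) = if T x = j then (p : ℂ) else 0 := by
      intro x; rw [horth]; simp [sub_eq_zero]
    rw [Finset.sum_congr rfl (fun x _ => key x), Finset.sum_ite, Finset.sum_const,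
      Finset.sum_const_zero, add_zero, nsmul_eq_mul, mul_comm]
  have hcol : ∑ u : ZMod p, g u 0 = (p : ℂ) * ((Dset f i).card : ℂ) := by
    have : ∀ u : ZMod p, g u 0 = ∑ x : F, ψ (u * (f x - i)) := by
      intro u; simp [hgdef]
    rw [Finset.sum_congr rfl (fun u _ => this u), Finset.sum_comm]
    have key : ∀ x : F, ∑ u : ZMod p, ψ (u * (f x - i)) = if f x = i then (p : ℂ) else 0 := by
      intro x; rw [horth]; simp [sub_eq_zero]
    rw [Finset.sum_congr rfl (fun x _ => key x), Finset.sum_ite, Finset.sum_const,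
      Finset.sum_const_zero, add_zero, nsmul_eq_mul, mul_comm]
    rfl
  have hzero : g 0 0 = (p : ℂ) ^ m := by
    simp [hgdef, hcard]
  -- units part
  have hunits : ∀ y : (ZMod p)ˣ,
      σ y (zeta p (-i) * ∑ z : (ZMod p)ˣ, zeta p (j * (z : ZMod p)) *
          walsh p f (algebraMap (ZMod p) F (z : ZMod p) * β))
        = ∑ v : (ZMod p)ˣ, g (y : ZMod p) (v : ZMod p) := by
    intro y
    have hwal : ∀ z : (ZMod p)ˣ,
        walsh p f (algebraMap (ZMod p) F (z : ZMod p) * β)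
          = ∑ x : F, ψ (f x - (z : ZMod p) * T x) := by
      intro z
      unfold walsh
      refine Finset.sum_congr rfl fun x _ => ?_
      rw [hzeta, mul_assoc, ← mul_assoc (algebraMap (ZMod p) F (z : ZMod p)) β x, hT]
    calc σ y (zeta p (-i) * ∑ z : (ZMod p)ˣ, zeta p (j * (z : ZMod p)) *
          walsh p f (algebraMap (ZMod p) F (z : ZMod p) * β))
        = ∑ z : (ZMod p)ˣ, ∑ x : F,
            ψ ((y : ZMod p) * (f x - i) + (-(y * z) : ZMod p) * (T x - j)) := by
          rw [map_mul, map_sum, Finset.mul_sum]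
          refine Finset.sum_congr rfl fun z _ => ?_
          rw [map_mul, hwal, map_sum, Finset.mul_sum, Finset.mul_sum]
          refine Finset.sum_congr rfl fun x _ => ?_
          rw [hzeta, hzeta, hσz, hσz, hσz, ← AddChar.map_add_eq_mul, ← AddChar.map_add_eq_mul]
          congr 1
          push_cast
          ring
      _ = ∑ z : (ZMod p)ˣ, g (y : ZMod p) ((-(y * z) : (ZMod p)ˣ) : ZMod p) := by
          refine Finset.sum_congr rfl fun z _ => ?_
          rw [hgdef]
          simp
      _ = ∑ v : (ZMod p)ˣ, g (y : ZMod p) (v : ZMod p) := by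
          exact Fintype.sum_equiv (Equiv.mulLeft (-y))
            (fun z => g (y : ZMod p) ((-(y * z) : (ZMod p)ˣ) : ZMod p))
            (fun v => g (y : ZMod p) (v : ZMod p)) (fun z => by simp [neg_mul])
  -- assemble
  have hsplitcol : ∑ u : (ZMod p)ˣ, g (u : ZMod p) 0
      = (p : ℂ) * ((Dset f i).card : ℂ) - (p : ℂ) ^ m := by
    have h := sum_split p (fun u => g u 0)
    rw [hcol, hzero] at h
    linear_combination -h
  have htot : ∑ u : ZMod p, ∑ v : ZMod p, g u v
      = (∑ v : ZMod p, g 0 v) + ∑ u : (ZMod p)ˣ,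
          (g (u : ZMod p) 0 + ∑ v : (ZMod p)ˣ, g (u : ZMod p) (v : ZMod p)) :=
    (sum_split p (fun u => ∑ v : ZMod p, g u v)).trans
      (congrArg _ (Finset.sum_congr rfl fun u _ => sum_split p (g (u : ZMod p))))
  rw [← hA, htot, hrow, Finset.sum_add_distrib, hsplitcol,
    Finset.sum_congr rfl (fun y (_ : y ∈ Finset.univ) => hunits y)]
  ring
end

section
/- Let p be a prime, m a positive integer, q = p^m, and let f : 𝔽_q → 𝔽_p be a p-ary function. Then for every nonzero β ∈ 𝔽_q^* and every i ∈ 𝔽_p, χ_β(D_{f,i}) = (1/p²) · Σ_{j∈𝔽_p} ζ_p^j · Σ_{y∈𝔽_p^*} σ_y( ζ_p^{−i} · Σ_{z∈𝔽_p^*} ζ_p^{jz} · W_f(zβ) ). -/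
open Finset

noncomputable def chi (p : ℕ) {F : Type*} [CommRing F] [Algebra (ZMod p) F]
    (β : F) (D : Finset F) : ℂ :=
  ∑ α ∈ D, zeta p (Algebra.trace (ZMod p) F (β * α))

section Helpers

variable (p : ℕ) [hp : Fact p.Prime]

lemma zeta_prim : IsPrimitiveRoot (Complex.exp (2 * Real.pi * Complex.I / p)) p :=
  Complex.isPrimitiveRoot_exp p hp.out.ne_zero

lemma zeta_pow_p : (Complex.exp (2 * Real.pi * Complex.I / p)) ^ p = 1 :=
  (zeta_prim p).pow_eq_one

/-- `zeta p` as an additive character. -/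
noncomputable def psi : AddChar (ZMod p) ℂ := AddChar.zmodChar p (zeta_pow_p p)

lemma zeta_eq_psi (a : ZMod p) : zeta p a = psi p a := rfl

lemma zeta_add (a b : ZMod p) : zeta p (a + b) = zeta p a * zeta p b := by
  rw [zeta_eq_psi, zeta_eq_psi, zeta_eq_psi, AddChar.map_add_eq_mul]

lemma zeta_zero : zeta p 0 = 1 := by
  rw [zeta_eq_psi, AddChar.map_zero_eq_one]

lemma zeta_natCast (n : ℕ) :
    zeta p (n : ZMod p) = (Complex.exp (2 * Real.pi * Complex.I / p)) ^ n := by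
  rw [zeta_eq_psi]
  exact AddChar.zmodChar_apply' (zeta_pow_p p) n

lemma zeta_eq_one_iff (a : ZMod p) : zeta p a = 1 ↔ a = 0 := by
  unfold zeta
  rw [(zeta_prim p).pow_eq_one_iff_dvd]
  constructor
  · intro h
    have := a.val_lt
    exact (ZMod.val_eq_zero a).mp (Nat.eq_zero_of_dvd_of_lt h this)
  · rintro rfl
    simp

lemma sigma_zeta (σ : ℂ →+* ℂ) (y : (ZMod p)ˣ)
    (hσ : σ (Complex.exp (2 * Real.pi * Complex.I / p))
        = Complex.exp (2 * Real.pi * Complex.I / p) ^ ((y : ZMod p)).val) (a : ZMod p) :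
    σ (zeta p a) = zeta p ((y : ZMod p) * a) := by
  unfold zeta
  rw [map_pow, hσ, ← pow_mul, ← zeta_natCast p (((y : ZMod p)).val * a.val)]
  unfold zeta
  congr 1
  push_cast
  simp [ZMod.natCast_val, ZMod.cast_id]

lemma sum_zeta_mul (c : ZMod p) :
    ∑ a : ZMod p, zeta p (c * a) = if c = 0 then (p : ℂ) else 0 := by
  split_ifs with h
  · subst h
    simp only [zero_mul, zeta_zero, Finset.sum_const, Finset.card_univ, ZMod.card, nsmul_eq_mul,
      mul_one]
  · have hprim : AddChar.IsPrimitive (psi p) := by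
      have := AddChar.zmodChar_primitive_of_primitive_root p (zeta_prim p)
      exact this
    have hne : AddChar.mulShift (psi p) c ≠ 1 := hprim h
    have := AddChar.sum_eq_zero_of_ne_one hne
    simpa only [AddChar.mulShift_apply, ← zeta_eq_psi] using this

lemma sum_units_add {K : Type*} [Field K] [Fintype K] [DecidableEq K] (g : K → ℂ) :
    ∑ a : K, g a = g 0 + ∑ y : Kˣ, g y := by
  rw [← Finset.add_sum_erase _ g (Finset.mem_univ 0)]
  congr 1
  have himg : (Finset.univ : Finset Kˣ).image (Units.val) = Finset.univ.erase 0 := by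
    ext a
    simp only [Finset.mem_image, Finset.mem_univ, true_and, Finset.mem_erase]
    constructor
    · rintro ⟨y, rfl⟩
      exact ⟨y.ne_zero, trivial⟩
    · rintro ⟨ha, -⟩
      exact ⟨Units.mk0 a ha, rfl⟩
  rw [← himg, Finset.sum_image (fun y _ z _ h => Units.ext h)]

lemma sum_units_zeta (c : ZMod p) :
    ∑ y : (ZMod p)ˣ, zeta p ((y : ZMod p) * c) = (if c = 0 then (p : ℂ) else 0) - 1 := by
  have h := sum_units_add (fun a : ZMod p => zeta p (a * c))
  have h2 : ∑ a : ZMod p, zeta p (a * c) = if c = 0 then (p : ℂ) else 0 := by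
    simp_rw [mul_comm]
    exact sum_zeta_mul p c
  rw [h2] at h
  simp only [zero_mul, zeta_zero] at h
  linear_combination -h

lemma sum_zeta_trace {F : Type*} [Field F] [Fintype F] [Algebra (ZMod p) F]
    (β : F) (hβ : β ≠ 0) :
    ∑ x : F, zeta p (Algebra.trace (ZMod p) F (β * x)) = 0 := by
  have : FiniteDimensional (ZMod p) F := Module.Finite.of_finite
  obtain ⟨w, hw⟩ : ∃ x : F, Algebra.trace (ZMod p) F (β * x) ≠ 0 := by
    by_contra h
    push_neg at h
    exact hβ ((traceForm_nondegenerate (ZMod p) F).1 β fun y => by simpa using h y)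
  set φ : AddChar F ℂ :=
    (psi p).compAddMonoidHom ((Algebra.trace (ZMod p) F).toAddMonoidHom.comp
      (AddMonoidHom.mulLeft β)) with hφ
  have hφne : φ ≠ 1 := by
    rw [AddChar.ne_one_iff]
    refine ⟨w, ?_⟩
    have : φ w = zeta p (Algebra.trace (ZMod p) F (β * w)) := rfl
    rw [this, ne_eq, zeta_eq_one_iff]
    exact hw
  have := AddChar.sum_eq_zero_of_ne_one hφne
  simpa only [hφ, AddChar.compAddMonoidHom_apply, AddMonoidHom.coe_comp,
    Function.comp_apply, AddMonoidHom.coe_mulLeft, LinearMap.toAddMonoidHom_coe,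
    ← zeta_eq_psi] using this

lemma swap3 {α β γ : Type*} [Fintype α] [Fintype β] [Fintype γ] (g : α → β → γ → ℂ) :
    ∑ j : α, ∑ y : β, ∑ u : γ, g j y u = ∑ y : β, ∑ u : γ, ∑ j : α, g j y u := by
  rw [Finset.sum_comm]
  exact Finset.sum_congr rfl fun y _ => Finset.sum_comm

end Helpers

/-- Corollary 3.2. For a `p`-ary function `f`, nonzero `β ∈ 𝔽_q^*` and
`i ∈ 𝔽_p`: `χ_β(D_{f,i}) = (1/p²) Σ_{j ∈ 𝔽_p} ζ_p^j Σ_{y ∈ 𝔽_p^*}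
σ_y(ζ_p^{-i} Σ_{z ∈ 𝔽_p^*} ζ_p^{jz} W_f(zβ))`, where `σ_y` is any ring homomorphism
`ℂ →+* ℂ` with `σ_y(ζ_p) = ζ_p^y`. -/
theorem stmt_1 (p m : ℕ) [Fact p.Prime] (hm : 0 < m)
    (F : Type*) [Field F] [Fintype F] [Algebra (ZMod p) F]
    (hcard : Fintype.card F = p ^ m)
    (f : F → ZMod p) (β : F) (hβ : β ≠ 0) (i : ZMod p)
    (σ : (ZMod p)ˣ → (ℂ →+* ℂ))
    (hσ : ∀ y : (ZMod p)ˣ, σ y (Complex.exp (2 * Real.pi * Complex.I / p))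
        = Complex.exp (2 * Real.pi * Complex.I / p) ^ ((y : ZMod p)).val) :
    chi p β (Dset f i)
      = (1 / (p : ℂ) ^ 2) * ∑ j : ZMod p, zeta p j *
          ∑ y : (ZMod p)ˣ, σ y (zeta p (-i) *
            ∑ z : (ZMod p)ˣ, zeta p (j * (z : ZMod p)) *
              walsh p f (algebraMap (ZMod p) F (z : ZMod p) * β)) := by
  have hpne : (p : ℂ) ≠ 0 := by
    exact_mod_cast (Fact.out : p.Prime).ne_zero
  set T : F → ZMod p := fun x => Algebra.trace (ZMod p) F (β * x) with hT
  -- Step 1+2: evaluate the σ-term and reindex z ↦ y⁻¹ u.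
  have step12 : ∀ (j : ZMod p) (y : (ZMod p)ˣ),
      σ y (zeta p (-i) * ∑ z : (ZMod p)ˣ, zeta p (j * (z : ZMod p)) *
          walsh p f (algebraMap (ZMod p) F (z : ZMod p) * β))
      = ∑ u : (ZMod p)ˣ, ∑ x : F,
          zeta p ((y : ZMod p) * (f x - i)) * zeta p (-(u : ZMod p) * T x)
            * zeta p (j * (u : ZMod p)) := by
    intro j y
    have h1 : zeta p (-i) * ∑ z : (ZMod p)ˣ, zeta p (j * (z : ZMod p)) *
          walsh p f (algebraMap (ZMod p) F (z : ZMod p) * β)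
        = ∑ z : (ZMod p)ˣ, ∑ x : F,
            zeta p (-i + (j * (z : ZMod p) + (f x - (z : ZMod p) * T x))) := by
      unfold walsh
      rw [Finset.mul_sum]
      refine Finset.sum_congr rfl fun z _ => ?_
      rw [Finset.mul_sum, Finset.mul_sum]
      refine Finset.sum_congr rfl fun x _ => ?_
      have htr : Algebra.trace (ZMod p) F (algebraMap (ZMod p) F (z : ZMod p) * β * x)
          = (z : ZMod p) * T x := by
        rw [mul_assoc, ← Algebra.smul_def, map_smul, smul_eq_mul, hT]
      rw [htr, ← zeta_add, ← zeta_add]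
    rw [h1, map_sum]
    rw [← Equiv.sum_comp (Equiv.mulLeft y)
      (fun u : (ZMod p)ˣ => ∑ x : F,
          zeta p ((y : ZMod p) * (f x - i)) * zeta p (-(u : ZMod p) * T x)
            * zeta p (j * (u : ZMod p)))]
    refine Finset.sum_congr rfl fun z _ => ?_
    rw [map_sum]
    refine Finset.sum_congr rfl fun x _ => ?_
    rw [sigma_zeta p (σ y) y (hσ y), ← zeta_add, ← zeta_add]
    congr 1
    simp only [Equiv.coe_mulLeft, Units.val_mul]
    ring
  simp_rw [step12]
  -- factor out the x-sum from zeta(j*u)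
  simp_rw [← Finset.sum_mul, Finset.mul_sum]
  -- combine zeta j with zeta (j*u)
  have hterm : ∀ (j c : ZMod p) (A : ℂ),
      zeta p j * (A * zeta p (j * c)) = A * zeta p ((1 + c) * j) := by
    intro j c A
    rw [show (1 + c) * j = j + j * c by ring, zeta_add]
    ring
  simp_rw [hterm]
  rw [swap3]
  -- evaluate the j-sum
  have hj : ∀ (c : ZMod p) (A : ℂ),
      ∑ j : ZMod p, (1 / (p : ℂ) ^ 2) * (A * zeta p ((1 + c) * j))
        = (1 / (p : ℂ) ^ 2) * (A * (if 1 + c = 0 then (p : ℂ) else 0)) := by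
    intro c A
    rw [← Finset.mul_sum, ← Finset.mul_sum, sum_zeta_mul p (1 + c)]
  have hyy : ∀ y : (ZMod p)ˣ,
      ∑ u : (ZMod p)ˣ, ∑ j : ZMod p, 1 / (p : ℂ) ^ 2 *
          ((∑ x : F, zeta p ((y : ZMod p) * (f x - i)) * zeta p (-(u : ZMod p) * T x))
            * zeta p ((1 + (u : ZMod p)) * j))
      = 1 / (p : ℂ) ^ 2 *
          ((∑ x : F, zeta p ((y : ZMod p) * (f x - i)) * zeta p (T x)) * p) := by
    intro y
    simp_rw [hj]
    rw [Finset.sum_eq_single (-1 : (ZMod p)ˣ)]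
    · simp
    · intro b _ hb
      have hbne : (1 : ZMod p) + (b : ZMod p) ≠ 0 := fun h =>
        hb (Units.ext (by rw [Units.val_neg, Units.val_one]; linear_combination h))
      simp [hbne]
    · simp
  rw [Finset.sum_congr rfl fun y _ => hyy y]
  rw [← Finset.mul_sum, ← Finset.sum_mul, Finset.sum_comm]
  simp_rw [← Finset.sum_mul]
  have hysum : ∀ x : F, ∑ y : (ZMod p)ˣ, zeta p ((y : ZMod p) * (f x - i))
      = (if f x - i = 0 then (p : ℂ) else 0) - 1 := fun x => sum_units_zeta p _
  simp_rw [hysum, sub_mul, one_mul, sub_eq_zero]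
  rw [Finset.sum_sub_distrib]
  have hzero : ∑ x : F, zeta p (T x) = 0 := by
    simp only [hT]
    exact sum_zeta_trace p β hβ
  rw [hzero, sub_zero]
  simp_rw [ite_mul, zero_mul]
  rw [← Finset.sum_filter]
  have hchi : ∑ x ∈ Finset.univ.filter (fun x => f x = i), (p : ℂ) * zeta p (T x)
      = (p : ℂ) * chi p β (Dset f i) := by
    unfold chi Dset
    rw [Finset.mul_sum]
  rw [hchi]
  field_simp
end

section
/- Let p be an odd prime, m an even positive integer, q = p^m, and let f : 𝔽_q → 𝔽_p be a p-ary function with f(0) = 0. Suppose there exist maps μ : 𝔽_q → {1, −1} and g : 𝔽_q → 𝔽_p such that W_f(β) = μ(β)·p^{m/2}·ζ_p^{g(β)} for all β ∈ 𝔽_q. Then for every i ∈ 𝔽_p^*, Σ_{β∈D_{g,i}} μ(β) − Σ_{β∈D_{g,0}} μ(β) = −p^{m/2}. -/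
open Finset

lemma sum_walsh (p : ℕ) [Fact p.Prime] (F : Type*) [Field F] [Fintype F] [Algebra (ZMod p) F]
    (f : F → ZMod p) (hf0 : f 0 = 0) :
    ∑ β : F, walsh p f β = (Fintype.card F : ℂ) := by
  have hp0 : p ≠ 0 := (Fact.out : p.Prime).ne_zero
  haveI : NeZero p := ⟨hp0⟩
  haveI : FiniteDimensional (ZMod p) F := Module.Finite.of_finite
  have hprim : IsPrimitiveRoot (Complex.exp (2 * Real.pi * Complex.I / p)) p :=
    Complex.isPrimitiveRoot_exp p hp0
  have hζ : (Complex.exp (2 * Real.pi * Complex.I / p)) ^ p = 1 := hprim.pow_eq_one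
  set ψ : AddChar (ZMod p) ℂ := AddChar.zmodChar p hζ with hψdef
  have hzeta : ∀ a : ZMod p, zeta p a = ψ a := fun a => rfl
  -- the linear character attached to x
  have key : ∀ x : F, x ≠ 0 →
      (∑ β : F, ψ (-(Algebra.trace (ZMod p) F (β * x)))) = 0 := by
    intro x hx
    let h : F →+ ZMod p := AddMonoidHom.mk' (fun β => -(Algebra.trace (ZMod p) F (β * x)))
      (by intro a b; rw [add_mul, map_add, neg_add])
    have : ∑ β : F, (ψ.compAddMonoidHom h) β = 0 := by
      apply AddChar.sum_eq_zero_of_ne_one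
      rw [AddChar.ne_one_iff]
      obtain ⟨y, hy⟩ := Algebra.trace_surjective (ZMod p) F 1
      refine ⟨y * x⁻¹, ?_⟩
      have : (ψ.compAddMonoidHom h) (y * x⁻¹) = ψ (-1) := by
        simp only [AddChar.compAddMonoidHom_apply, h, AddMonoidHom.mk'_apply]
        rw [mul_assoc, inv_mul_cancel₀ hx, mul_one, hy]
      rw [this, AddChar.zmodChar_apply]
      haveI : Fact (1 < p) := ⟨(Fact.out : p.Prime).one_lt⟩
      apply hprim.pow_ne_one_of_pos_of_lt
      · have h1 : (-1 : ZMod p) ≠ 0 := neg_ne_zero.mpr one_ne_zero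
        have := (ZMod.val_eq_zero (-1 : ZMod p)).not.mpr h1
        omega
      · exact ZMod.val_lt _
    exact this
  calc ∑ β : F, walsh p f β
      = ∑ x : F, ∑ β : F, ψ (f x) * ψ (-(Algebra.trace (ZMod p) F (β * x))) := by
        rw [Finset.sum_comm]
        refine Finset.sum_congr rfl fun β _ => Finset.sum_congr rfl fun x _ => ?_
        rw [hzeta, sub_eq_add_neg, AddChar.map_add_eq_mul]
    _ = ∑ x : F, ψ (f x) * ∑ β : F, ψ (-(Algebra.trace (ZMod p) F (β * x))) := by
        simp_rw [Finset.mul_sum]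
    _ = (Fintype.card F : ℂ) := by
        rw [Finset.sum_eq_single 0]
        · simp [hf0, Finset.card_univ]
        · intro x _ hx
          rw [key x hx, mul_zero]
        · simp

theorem stmt_5' (p m : ℕ) [Fact p.Prime] (hp : Odd p) (hm : 0 < m) (hme : Even m)
    (F : Type*) [Field F] [Fintype F] [Algebra (ZMod p) F]
    (hcard : Fintype.card F = p ^ m)
    (f : F → ZMod p) (hf0 : f 0 = 0)
    (μ : F → ℂ) (hμ : ∀ β : F, μ β = 1 ∨ μ β = -1)
    (g : F → ZMod p)
    (hW : ∀ β : F, walsh p f β = μ β * (p : ℂ) ^ (m / 2) * zeta p (g β)) :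
    ∀ i : ZMod p, i ≠ 0 →
      (∑ β ∈ Finset.univ.filter fun x => g x = i, μ β)
        - (∑ β ∈ Finset.univ.filter fun x => g x = 0, μ β) = -(p : ℂ) ^ (m / 2) := by
  classical
  have hpP : p.Prime := Fact.out
  have hp0 : p ≠ 0 := hpP.ne_zero
  haveI : NeZero p := ⟨hp0⟩
  obtain ⟨t, ht⟩ := hme
  have htm : m / 2 = t := by omega
  set c : ℂ := (p : ℂ) ^ (m / 2) with hc
  have hcne : c ≠ 0 := pow_ne_zero _ (Nat.cast_ne_zero.mpr hp0)
  set S : ZMod p → ℂ := fun i => ∑ β ∈ Finset.univ.filter fun x => g x = i, μ β with hS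
  -- step 1: sum of Walsh values
  have h1 : ∑ β : F, walsh p f β = (p : ℂ) ^ m := by
    rw [sum_walsh p F f hf0, hcard]; push_cast; ring
  -- step 2: fiberwise decomposition
  have h2 : ∑ β : F, walsh p f β = c * ∑ i : ZMod p, S i * zeta p i := by
    calc ∑ β : F, walsh p f β = c * ∑ β : F, μ β * zeta p (g β) := by
          rw [Finset.mul_sum]
          exact Finset.sum_congr rfl fun β _ => by rw [hW β]; ring
      _ = c * ∑ i : ZMod p, ∑ β ∈ Finset.univ.filter fun x => g x = i, μ β * zeta p (g β) := by
          rw [Finset.sum_fiberwise_of_maps_to (fun β _ => Finset.mem_univ (g β))]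
      _ = c * ∑ i : ZMod p, S i * zeta p i := by
          congr 1
          refine Finset.sum_congr rfl fun i _ => ?_
          rw [hS, Finset.sum_mul]
          exact Finset.sum_congr rfl fun β hβ => by
            rw [(Finset.mem_filter.mp hβ).2]
  have h3 : ∑ i : ZMod p, S i * zeta p i = c := by
    have hcc : c * c = (p : ℂ) ^ m := by
      rw [hc, htm, ← pow_add]; congr 1; omega
    have h := h1.symm.trans h2
    rw [← hcc] at h
    exact (mul_left_cancel₀ hcne h).symm
  -- step 3: the S i are integers
  have hint : ∀ i : ZMod p, ∃ k : ℤ, S i = (k : ℂ) := by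
    intro i
    have : S i ∈ (Int.castRingHom ℂ).range := by
      apply Subring.sum_mem
      intro β _
      rcases hμ β with h | h <;> rw [h]
      · exact ⟨1, by simp⟩
      · exact ⟨-1, by simp⟩
    obtain ⟨k, hk⟩ := this
    exact ⟨k, hk.symm⟩
  choose k hk using hint
  -- step 4: polynomial argument
  set ζ : ℂ := Complex.exp (2 * Real.pi * Complex.I / p) with hζdef
  have hprim : IsPrimitiveRoot ζ p := Complex.isPrimitiveRoot_exp p hp0
  set a : ZMod p → ℚ := fun i => (k i : ℚ) - if i = 0 then (p : ℚ) ^ (m / 2) else 0 with ha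
  set Q : Polynomial ℚ := ∑ i : ZMod p, Polynomial.C (a i) * Polynomial.X ^ i.val with hQ
  have haeval : Polynomial.aeval ζ Q = 0 := by
    rw [hQ, map_sum]
    have : ∀ i : ZMod p, Polynomial.aeval ζ (Polynomial.C (a i) * Polynomial.X ^ i.val)
        = (a i : ℂ) * ζ ^ i.val := by
      intro i; simp [Polynomial.aeval_C]
    rw [Finset.sum_congr rfl fun i _ => this i]
    have expand : ∀ i : ZMod p, ((a i : ℂ)) * ζ ^ i.val
        = S i * zeta p i - (if i = 0 then c else 0) := by
      intro i
      rw [ha, hk i]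
      simp only [zeta]
      push_cast
      split_ifs with h
      · subst h; simp [hc]
      · ring
    rw [Finset.sum_congr rfl fun i _ => expand i, Finset.sum_sub_distrib, h3]
    simp
  have hQdeg : Q.natDegree ≤ p - 1 := by
    apply Polynomial.natDegree_sum_le_of_forall_le
    intro i _
    exact le_trans (Polynomial.natDegree_C_mul_X_pow_le _ _) (by have := ZMod.val_lt i; omega)
  have hQcoeff : ∀ j : ℕ, j < p → Q.coeff j = a ((j : ZMod p)) := by
    intro j hj
    rw [hQ, Polynomial.finset_sum_coeff]
    rw [Finset.sum_eq_single ((j : ZMod p))]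
    · rw [Polynomial.coeff_C_mul, Polynomial.coeff_X_pow, ZMod.val_natCast_of_lt hj]
      simp
    · intro i _ hi
      rw [Polynomial.coeff_C_mul, Polynomial.coeff_X_pow, if_neg, mul_zero]
      intro hvj
      exact hi (by rw [hvj]; exact (ZMod.natCast_zmod_val i).symm)
    · simp
  -- divisibility by the cyclotomic polynomial
  have hmin : Polynomial.cyclotomic p ℚ = minpoly ℚ ζ :=
    Polynomial.cyclotomic_eq_minpoly_rat hprim hpP.pos
  have hdvd : Polynomial.cyclotomic p ℚ ∣ Q := by
    rw [hmin]; exact minpoly.dvd ℚ ζ haeval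
  obtain ⟨R, hR⟩ := hdvd
  have hΦdeg : (Polynomial.cyclotomic p ℚ).natDegree = p - 1 := by
    rw [Polynomial.natDegree_cyclotomic, Nat.totient_prime hpP]
  have hRC : R = Polynomial.C (R.coeff 0) := by
    rcases eq_or_ne Q 0 with hQ0 | hQ0
    · have : R = 0 := by
        rcases mul_eq_zero.mp (hR ▸ hQ0 : Polynomial.cyclotomic p ℚ * R = 0) with h | h
        · exact absurd h (Polynomial.cyclotomic_ne_zero p ℚ)
        · exact h
      rw [this]; simp
    · have hRne : R ≠ 0 := by
        rintro rfl; rw [mul_zero] at hR; exact hQ0 hR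
      have : Q.natDegree = (p - 1) + R.natDegree := by
        rw [hR, Polynomial.natDegree_mul (Polynomial.cyclotomic_ne_zero p ℚ) hRne, hΦdeg]
      have hR0 : R.natDegree = 0 := by omega
      exact Polynomial.eq_C_of_natDegree_le_zero (le_of_eq hR0)
  have hΦcoeff : ∀ j : ℕ, j < p → (Polynomial.cyclotomic p ℚ).coeff j = 1 := by
    intro j hj
    rw [Polynomial.cyclotomic_prime, Polynomial.finset_sum_coeff]
    rw [Finset.sum_eq_single j]
    · simp
    · intro i _ hi; rw [Polynomial.coeff_X_pow, if_neg (fun h => hi h.symm)]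
    · intro h; exact absurd (Finset.mem_range.mpr hj) h
  have hcoeffconst : ∀ j : ℕ, j < p → Q.coeff j = R.coeff 0 := by
    intro j hj
    rw [hR, hRC, Polynomial.coeff_mul_C, hΦcoeff j hj, one_mul]
    simp
  -- conclude
  intro i hi
  have h01 : Q.coeff 0 = Q.coeff i.val := by
    rw [hcoeffconst 0 hpP.pos, hcoeffconst i.val (ZMod.val_lt i)]
  rw [hQcoeff 0 hpP.pos, hQcoeff i.val (ZMod.val_lt i)] at h01
  rw [Nat.cast_zero, ZMod.natCast_val, ZMod.cast_id] at h01
  rw [ha] at h01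
  simp only [if_pos rfl, if_neg hi] at h01
  norm_num at h01
  -- h01 : (k 0 : ℚ) - p^(m/2) = (k i : ℚ) - 0
  have : (k i : ℚ) - (k 0 : ℚ) = -(p : ℚ) ^ (m / 2) := by linarith
  have hcast : (k i : ℂ) - (k 0 : ℂ) = -(p : ℂ) ^ (m / 2) := by
    exact_mod_cast congrArg (fun x : ℚ => (x : ℂ)) this
  rw [show (∑ β ∈ Finset.univ.filter fun x => g x = i, μ β) = S i from rfl,
    show (∑ β ∈ Finset.univ.filter fun x => g x = 0, μ β) = S 0 from rfl, hk i, hk 0]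
  exact hcast

/-- Lemma 4.2(iii), `m` even. Let `p` be an odd prime, `m` even positive,
`q = p^m`, `f : 𝔽_q → 𝔽_p` with `f(0) = 0`, and suppose `W_f(β) = μ(β)·p^{m/2}·ζ_p^{g(β)}`
for maps `μ : 𝔽_q → {1,-1}` and `g : 𝔽_q → 𝔽_p`. Then for every `i ∈ 𝔽_p^*`,
`Σ_{β ∈ D_{g,i}} μ(β) − Σ_{β ∈ D_{g,0}} μ(β) = −p^{m/2}`. -/
theorem stmt_5 (p m : ℕ) [Fact p.Prime] (hp : Odd p) (hm : 0 < m) (hme : Even m)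
    (F : Type*) [Field F] [Fintype F] [Algebra (ZMod p) F]
    (hcard : Fintype.card F = p ^ m)
    (f : F → ZMod p) (hf0 : f 0 = 0)
    (μ : F → ℂ) (hμ : ∀ β : F, μ β = 1 ∨ μ β = -1)
    (g : F → ZMod p)
    (hW : ∀ β : F, walsh p f β = μ β * (p : ℂ) ^ (m / 2) * zeta p (g β)) :
    ∀ i : ZMod p, i ≠ 0 →
      (∑ β ∈ Dset g i, μ β) - (∑ β ∈ Dset g 0, μ β) = -(p : ℂ) ^ (m / 2) := by
  intro i hi
  simpa [Dset] using stmt_5' p m hp hm hme F hcard f hf0 μ hμ g hW i hi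
end
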